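/- ζ(1̄,2̄) = −2·ζ(1̄,2) + ζ(2̄,1), i.e., Σ_{k>l≥1} (−1)^{k+l}/(k·l²) = −2·Σ_{k>l≥1} (−1)^k/(k·l²) + Σ_{k>l≥1} (−1)^k/(k²·l). -/

import Mathlib

/-!
Let `L` be the sum of the alternating harmonic series, `ζ(p)` and `ζ(p̄) = ∑ (-1)ⁿ/nᵖ` the
single sums, and `S = ∑_d (-1)ᵈ H_d / d²`. Truncate every double series to `k ≤ N` and write
`k = j + d`. Partial fractions in `j`, `d`, `j + d` turn the truncations into Cauchy-type products
`∑_{d+j≤N} v_d u_j` with `u_j = (-1)ʲ/j`, which tend to `(∑ v) L` by dominated convergence, and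
into `∑_{d+j≤N} (-1)ᵈ/d² (1/j - 1/(j+d))`, which tends to `S = ζ(2̄,1) + ζ(3̄)`. This gives
* `ζ(1̄,2̄) = ζ(2) L - S`,
* `2 ζ(2̄,1) + ζ(1̄,2) = ζ(2̄) L`,
* `ζ(1̄,2̄) + ζ(1̄,2) = (ζ(2) + ζ(2̄)) L - S - ζ(3) - ζ(3̄)`, from the product of the partial sums
  of `L` and of `ζ(2) + ζ(2̄)`.

Since `ζ(p̄) = (2^{1-p} - 1) ζ(p)`, eliminating `L`, `S` and the single sums leaves the claim
(and `ζ(2̄,1) = ζ(3)/8`).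
-/

open Filter Topology Finset

lemma sum_Icc_one_eq_sum_range {M : Type*} [AddCommMonoid M] (f : ℕ → M) (N : ℕ) :
    ∑ k ∈ Icc 1 N, f k = ∑ i ∈ range N, f (i + 1) := by
  rw [range_eq_Ico, sum_Ico_add' f 0 N 1, Ico_add_one_right_eq_Icc]

lemma HasSum.tendsto_sum_Icc_one {M : Type*} [AddCommMonoid M] [TopologicalSpace M]
    {f : ℕ → M} {c : M} (h : HasSum f c) (h0 : f 0 = 0) :
    Tendsto (fun N => ∑ k ∈ Icc 1 N, f k) atTop (𝓝 c) := by
  refine (h.tendsto_sum_nat.comp (tendsto_add_atTop_nat 1)).congr fun N => ?_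
  simp [sum_range_succ', h0, sum_Icc_one_eq_sum_range]

lemma tsum_ite_Ico {M : Type*} [AddCommMonoid M] [TopologicalSpace M] (k : ℕ) (f : ℕ → M) :
    (∑' l : ℕ, if 1 ≤ l ∧ l < k then f l else 0) = ∑ l ∈ Ico 1 k, f l := by
  rw [tsum_eq_sum (s := Ico 1 k) fun l hl => if_neg (by simpa using hl)]
  exact sum_congr rfl fun l hl => if_pos (by simpa using hl)

section TriangleSums

variable {M : Type*} [AddCommMonoid M]

def triangleSum (N : ℕ) (f : ℕ → ℕ → M) : M := ∑ k ∈ Icc 1 N, ∑ l ∈ Ico 1 k, f k l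

def simplexSum (N : ℕ) (g : ℕ → ℕ → M) : M := ∑ d ∈ Icc 1 N, ∑ j ∈ Icc 1 (N - d), g d j

lemma simplexSum_comm (N : ℕ) (g : ℕ → ℕ → M) :
    simplexSum N g = simplexSum N fun d j => g j d :=
  sum_comm' fun d j => by simp only [mem_Icc]; omega

lemma triangleSum_eq_simplexSum (N : ℕ) (f : ℕ → ℕ → M) :
    triangleSum N f = simplexSum N fun d j => f (j + d) j := by
  rw [simplexSum_comm, triangleSum, simplexSum, sum_sigma', sum_sigma']
  refine sum_nbij' (fun x => ⟨x.2, x.1 - x.2⟩) (fun x => ⟨x.1 + x.2, x.1⟩) ?_ ?_ ?_ ?_ ?_ <;>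
    rintro ⟨k, l⟩ h <;> simp only [mem_sigma, mem_Icc, mem_Ico] at h ⊢
  · omega
  · omega
  · rw [Nat.add_sub_cancel' h.2.2.le]
  · rw [Nat.add_sub_cancel_left]
  · rw [Nat.add_sub_cancel' h.2.2.le]

lemma simplexSum_congr {N : ℕ} {g g' : ℕ → ℕ → M}
    (h : ∀ d j, 1 ≤ d → 1 ≤ j → g d j = g' d j) : simplexSum N g = simplexSum N g' :=
  sum_congr rfl fun d hd => sum_congr rfl fun j hj => h d j (mem_Icc.1 hd).1 (mem_Icc.1 hj).1

lemma simplexSum_add (N : ℕ) (g g' : ℕ → ℕ → M) :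
    simplexSum N (fun d j => g d j + g' d j) = simplexSum N g + simplexSum N g' := by
  simp only [simplexSum, sum_add_distrib]

end TriangleSums

lemma simplexSum_sub {G : Type*} [AddCommGroup G] (N : ℕ) (g g' : ℕ → ℕ → G) :
    simplexSum N (fun d j => g d j - g' d j) = simplexSum N g - simplexSum N g' := by
  simp only [simplexSum, sum_sub_distrib]

lemma sum_Icc_mul_sum_Icc {R : Type*} [NonUnitalNonAssocSemiring R] (N : ℕ) (u v : ℕ → R) :
    (∑ k ∈ Icc 1 N, u k) * (∑ l ∈ Icc 1 N, v l) =
      triangleSum N (fun k l => u k * v l) + triangleSum N (fun k l => u l * v k) +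
        ∑ k ∈ Icc 1 N, u k * v k := by
  induction N with
  | zero => simp [triangleSum]
  | succ N ih =>
    simp only [triangleSum] at ih ⊢
    rw [sum_Icc_succ_top (by omega), sum_Icc_succ_top (by omega), sum_Icc_succ_top (by omega),
      sum_Icc_succ_top (by omega), sum_Icc_succ_top (by omega), Ico_add_one_right_eq_Icc,
      add_mul, mul_add, mul_add, ih, mul_sum, sum_mul]
    abel

lemma exists_tendsto_sum_Icc_neg_one_pow_mul_inv :
    ∃ L : ℝ, Tendsto (fun N : ℕ => ∑ k ∈ Icc 1 N, (-1 : ℝ) ^ k * (k : ℝ)⁻¹) atTop (𝓝 L) := by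
  have hanti : Antitone fun i : ℕ => 1 / ((i : ℝ) + 1) := fun i j hij => by
    dsimp only
    gcongr
  obtain ⟨L, hL⟩ := hanti.tendsto_alternating_series_of_tendsto_zero
    tendsto_one_div_add_atTop_nhds_zero_nat
  refine ⟨-L, hL.neg.congr fun N => ?_⟩
  rw [sum_Icc_one_eq_sum_range, ← sum_neg_distrib]
  refine sum_congr rfl fun i _ => ?_
  push_cast
  ring

lemma tsum_neg_one_pow_mul_eq {R : Type*} [Ring R] [UniformSpace R] [IsUniformAddGroup R]
    [CompleteSpace R] [T2Space R] {f : ℕ → R} (hf : Summable f) :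
    ∑' n, (-1 : R) ^ n * f n = 2 * ∑' k, f (2 * k) - ∑' n, f n := by
  have he : Summable fun k => f (2 * k) := hf.comp_injective (mul_right_injective₀ two_ne_zero)
  have ho : Summable fun k => f (2 * k + 1) :=
    hf.comp_injective ((add_left_injective 1).comp (mul_right_injective₀ two_ne_zero))
  have h_even : ∀ k, (-1 : R) ^ (2 * k) * f (2 * k) = f (2 * k) := fun k => by
    rw [pow_mul, neg_one_sq, one_pow, one_mul]
  have h_odd : ∀ k, (-1 : R) ^ (2 * k + 1) * f (2 * k + 1) = -f (2 * k + 1) := fun k => by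
    rw [pow_succ, pow_mul, neg_one_sq, one_pow, one_mul, neg_one_mul]
  rw [← tsum_even_add_odd (f := fun n => (-1 : R) ^ n * f n), ← tsum_even_add_odd he ho]
  · simp only [h_even, h_odd, tsum_neg]
    rw [two_mul]
    abel
  · simpa only [h_even] using he
  · simpa only [h_odd] using ho.neg

lemma tsum_neg_one_pow_mul_inv_pow {p : ℕ} (hp : 1 < p) :
    ∑' n : ℕ, (-1 : ℝ) ^ n * ((n : ℝ) ^ p)⁻¹ = (2 / 2 ^ p - 1) * ∑' n : ℕ, ((n : ℝ) ^ p)⁻¹ := by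
  have hdouble : ∀ k : ℕ, (((2 * k : ℕ) : ℝ) ^ p)⁻¹ = (2 ^ p)⁻¹ * ((k : ℝ) ^ p)⁻¹ := fun k => by
    push_cast
    rw [mul_pow, mul_inv]
  rw [tsum_neg_one_pow_mul_eq (Real.summable_nat_pow_inv.2 hp)]
  simp only [hdouble, tsum_mul_left]
  ring

lemma harmonic_nonneg (n : ℕ) : (0 : ℝ) ≤ harmonic n :=
  Rat.cast_nonneg.2 <| sum_nonneg fun _ _ => by positivity

lemma harmonic_add_sub_harmonic (M d : ℕ) :
    (harmonic (M + d) : ℝ) - harmonic M = ∑ i ∈ range d, ((M : ℝ) + i + 1)⁻¹ := by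
  simp only [harmonic, sum_range_add]
  push_cast
  ring

lemma harmonic_add_sub_harmonic_nonneg (M d : ℕ) : 0 ≤ (harmonic (M + d) : ℝ) - harmonic M := by
  rw [harmonic_add_sub_harmonic]
  positivity

lemma harmonic_add_sub_harmonic_le (M d : ℕ) :
    (harmonic (M + d) : ℝ) - harmonic M ≤ harmonic d := by
  rw [harmonic_add_sub_harmonic, harmonic]
  push_cast
  gcongr
  linarith

lemma tendsto_harmonic_add_sub_harmonic (d : ℕ) :
    Tendsto (fun M => (harmonic (M + d) : ℝ) - harmonic M) atTop (𝓝 0) := by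
  have hupper (M : ℕ) : (harmonic (M + d) : ℝ) - harmonic M ≤ d * ((M : ℝ) + 1)⁻¹ := by
    rw [harmonic_add_sub_harmonic]
    calc ∑ i ∈ range d, ((M : ℝ) + i + 1)⁻¹ ≤ ∑ i ∈ range d, ((M : ℝ) + 1)⁻¹ := by
          gcongr
          linarith
      _ = d * ((M : ℝ) + 1)⁻¹ := by simp
  refine tendsto_of_tendsto_of_tendsto_of_le_of_le tendsto_const_nhds ?_
    (harmonic_add_sub_harmonic_nonneg · d) hupper
  simpa using tendsto_one_div_add_atTop_nhds_zero_nat.const_mul (d : ℝ)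

lemma sum_Icc_inv_sub_inv_add (M d : ℕ) :
    ∑ j ∈ Icc 1 M, ((j : ℝ)⁻¹ - ((j : ℝ) + d)⁻¹) =
      harmonic d - ((harmonic (M + d) : ℝ) - harmonic M) := by
  induction M with
  | zero => simp
  | succ M ih =>
    rw [sum_Icc_succ_top (by omega), ih, show M + 1 + d = M + d + 1 by omega,
      harmonic_succ, harmonic_succ]
    push_cast
    ring

lemma sum_Ico_one_inv (k : ℕ) : ∑ l ∈ Ico 1 k, (l : ℝ)⁻¹ = harmonic k - (k : ℝ)⁻¹ := by
  cases k with
  | zero => simp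
  | succ k =>
    rw [Ico_add_one_right_eq_Icc, harmonic_succ]
    push_cast [harmonic_eq_sum_Icc]
    ring

lemma summable_inv_sq_mul_harmonic :
    Summable fun n : ℕ => ((n : ℝ) ^ 2)⁻¹ * harmonic n := by
  refine Summable.of_nonneg_of_le (fun n => mul_nonneg (by positivity) (harmonic_nonneg n))
    (fun n => ?_) ((Real.summable_nat_rpow_inv.2 (by norm_num : (1 : ℝ) < 3 / 2)).mul_left 3)
  rcases Nat.eq_zero_or_pos n with rfl | hn
  · simp
  have hn1 : (1 : ℝ) ≤ n := by exact_mod_cast hn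
  have hsqrt : (1 : ℝ) ≤ (n : ℝ) ^ (1 / 2 : ℝ) := Real.one_le_rpow hn1 (by norm_num)
  have hlog : Real.log n ≤ 2 * (n : ℝ) ^ (1 / 2 : ℝ) := by
    have := Real.log_le_rpow_div (Nat.cast_nonneg n) (by norm_num : (0 : ℝ) < 1 / 2)
    linarith
  have hsplit : ((n : ℝ) ^ 2)⁻¹ * (n : ℝ) ^ (1 / 2 : ℝ) = ((n : ℝ) ^ (3 / 2 : ℝ))⁻¹ := by
    rw [← Real.rpow_natCast, ← Real.rpow_neg (by positivity), ← Real.rpow_neg (by positivity),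
      ← Real.rpow_add (by positivity)]
    norm_num
  calc ((n : ℝ) ^ 2)⁻¹ * harmonic n ≤ ((n : ℝ) ^ 2)⁻¹ * (3 * (n : ℝ) ^ (1 / 2 : ℝ)) := by
        gcongr
        linarith [harmonic_le_one_add_log n]
    _ = 3 * ((n : ℝ) ^ (3 / 2 : ℝ))⁻¹ := by rw [← hsplit]; ring

lemma summable_abs_neg_one_pow_mul_inv_sq_mul_harmonic :
    Summable fun d : ℕ => |(-1 : ℝ) ^ d * ((d : ℝ) ^ 2)⁻¹| * harmonic d := by
  simpa only [abs_mul, abs_pow, abs_neg, abs_one, one_pow, one_mul, abs_inv, Nat.abs_cast]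
    using summable_inv_sq_mul_harmonic

lemma tendsto_simplexSum_mul_inv_sub_inv {w : ℕ → ℝ}
    (hw : Summable fun d => |w d| * harmonic d) :
    Tendsto (fun N => simplexSum N fun d j => w d * ((j : ℝ)⁻¹ - ((j : ℝ) + d)⁻¹)) atTop
      (𝓝 (∑' d, w d * harmonic d)) := by
  set T : ℕ → ℕ → ℝ := fun M d => ∑ j ∈ Icc 1 M, ((j : ℝ)⁻¹ - ((j : ℝ) + d)⁻¹)
  have hsimplex (N : ℕ) : (simplexSum N fun d j => w d * ((j : ℝ)⁻¹ - ((j : ℝ) + d)⁻¹)) =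
      ∑' d, w d * T (N - d) d := by
    rw [tsum_eq_sum (s := Icc 1 N)]
    · simp only [simplexSum, mul_sum, T]
    · intro d hd
      rcases Nat.eq_zero_or_pos d with rfl | hd0
      · simp [T]
      · simp [T, show N - d = 0 by simp at hd; omega]
  have hbound (M d : ℕ) : |T M d| ≤ harmonic d := by
    simp only [T]
    rw [sum_Icc_inv_sub_inv_add, abs_le]
    have := harmonic_add_sub_harmonic_le M d
    have := harmonic_add_sub_harmonic_nonneg M d
    constructor <;> linarith
  have hlim (d : ℕ) : Tendsto (fun M => T M d) atTop (𝓝 (harmonic d)) := by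
    simpa only [T, sum_Icc_inv_sub_inv_add, sub_zero] using
      (tendsto_harmonic_add_sub_harmonic d).const_sub (harmonic d : ℝ)
  refine (tendsto_tsum_of_dominated_convergence hw
    (fun d => ((hlim d).comp (tendsto_sub_atTop_nat d)).const_mul (w d))
    (Eventually.of_forall fun N d => ?_)).congr fun N => (hsimplex N).symm
  rw [norm_mul, Real.norm_eq_abs, Real.norm_eq_abs]
  exact mul_le_mul_of_nonneg_left (hbound _ _) (abs_nonneg _)

lemma tendsto_simplexSum_mul {v u : ℕ → ℝ} {L : ℝ} (hv : Summable v) (hv0 : v 0 = 0)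
    (hu : Tendsto (fun N => ∑ j ∈ Icc 1 N, u j) atTop (𝓝 L)) :
    Tendsto (fun N => simplexSum N fun d j => v d * u j) atTop (𝓝 ((∑' d, v d) * L)) := by
  set U : ℕ → ℝ := fun N => ∑ j ∈ Icc 1 N, u j
  obtain ⟨C, hC⟩ := isBounded_iff_forall_norm_le.1 (Metric.isBounded_range_of_tendsto U hu)
  have hsimplex (N : ℕ) : (simplexSum N fun d j => v d * u j) = ∑' d, v d * U (N - d) := by
    rw [tsum_eq_sum (s := Icc 1 N)]
    · simp only [simplexSum, mul_sum, U]
    · intro d hd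
      rcases Nat.eq_zero_or_pos d with rfl | hd0
      · simp [hv0]
      · simp [U, show N - d = 0 by simp at hd; omega]
  rw [← tsum_mul_right]
  refine (tendsto_tsum_of_dominated_convergence (hv.abs.mul_right C)
    (fun d => (hu.comp (tendsto_sub_atTop_nat d)).const_mul (v d))
    (Eventually.of_forall fun N d => ?_)).congr fun N => (hsimplex N).symm
  rw [norm_mul, Real.norm_eq_abs]
  exact mul_le_mul_of_nonneg_left (hC _ (Set.mem_range_self _)) (abs_nonneg _)

lemma triangleSum_neg_one_pow_add (N : ℕ) :
    triangleSum N (fun k l => (-1 : ℝ) ^ (k + l) * ((k : ℝ) * (l : ℝ) ^ 2)⁻¹) =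
      (simplexSum N fun d j => ((d : ℝ) ^ 2)⁻¹ * ((-1) ^ j * (j : ℝ)⁻¹)) -
        simplexSum N fun d j => (-1) ^ d * ((d : ℝ) ^ 2)⁻¹ * ((j : ℝ)⁻¹ - ((j : ℝ) + d)⁻¹) := by
  rw [triangleSum_eq_simplexSum, simplexSum_comm N fun d j => ((d : ℝ) ^ 2)⁻¹ * _,
    ← simplexSum_sub]
  refine simplexSum_congr fun d j hd hj => ?_
  have hd' : (d : ℝ) ≠ 0 := by positivity
  have hj' : (j : ℝ) ≠ 0 := by positivity
  rw [show j + d + j = d + 2 * j by ring, pow_add, pow_mul, neg_one_sq, one_pow, mul_one]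
  push_cast
  field_simp
  ring

lemma triangleSum_neg_one_pow_inv_sq_mul (N : ℕ) :
    triangleSum N (fun k l => (-1 : ℝ) ^ k * ((k : ℝ) ^ 2 * l)⁻¹) =
      (simplexSum N fun d j => (-1) ^ d * ((d : ℝ) ^ 2)⁻¹ * ((-1) ^ j * (j : ℝ)⁻¹)) -
        triangleSum N (fun k l => (-1 : ℝ) ^ k * ((k : ℝ) * (l : ℝ) ^ 2)⁻¹) -
        triangleSum N (fun k l => (-1 : ℝ) ^ k * ((k : ℝ) ^ 2 * l)⁻¹) := by
  have hb : triangleSum N (fun k l => (-1 : ℝ) ^ k * ((k : ℝ) * (l : ℝ) ^ 2)⁻¹) =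
      simplexSum N fun d j => (-1) ^ (j + d) * ((d : ℝ) ^ 2 * (j + d))⁻¹ := by
    rw [triangleSum_eq_simplexSum, simplexSum_comm]
    refine simplexSum_congr fun d j _ _ => ?_
    push_cast
    ring
  have hc : triangleSum N (fun k l => (-1 : ℝ) ^ k * ((k : ℝ) ^ 2 * l)⁻¹) =
      simplexSum N fun d j => (-1) ^ (j + d) * ((d : ℝ) * (j + d) ^ 2)⁻¹ := by
    rw [triangleSum_eq_simplexSum, simplexSum_comm]
    refine simplexSum_congr fun d j _ _ => ?_
    push_cast
    ring
  conv_lhs => rw [triangleSum_eq_simplexSum]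
  rw [hb, hc, ← simplexSum_sub, ← simplexSum_sub]
  refine simplexSum_congr fun d j hd hj => ?_
  have hd' : (d : ℝ) ≠ 0 := by positivity
  have hj' : (j : ℝ) ≠ 0 := by positivity
  have hjd : (j : ℝ) + d ≠ 0 := by positivity
  push_cast
  rw [pow_add]
  field_simp
  ring

lemma neg_one_pow_mul_self {R : Type*} [Monoid R] [HasDistribNeg R] (k : ℕ) :
    (-1 : R) ^ k * (-1) ^ k = 1 := by
  rw [← pow_add, ← two_mul, pow_mul, neg_one_sq, one_pow]

lemma triangleSum_eq_simplexSum_mul_inv_sub_inv (N : ℕ) :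
    triangleSum N (fun k l => (-1 : ℝ) ^ l * (l : ℝ)⁻¹ *
        (((k : ℝ) ^ 2)⁻¹ + (-1) ^ k * ((k : ℝ) ^ 2)⁻¹)) =
      simplexSum N fun d j => (-1) ^ d * ((d : ℝ) ^ 2)⁻¹ * ((j : ℝ)⁻¹ - ((j : ℝ) + d)⁻¹) := by
  rw [triangleSum_eq_simplexSum]
  calc _ = simplexSum N (fun d j => (-1 : ℝ) ^ j * ((j : ℝ) * (j + d) ^ 2)⁻¹ +
        (-1) ^ d * ((j : ℝ) * (j + d) ^ 2)⁻¹) := by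
        refine simplexSum_congr fun d j _ _ => ?_
        push_cast
        rw [pow_add, mul_inv]
        linear_combination
          (-1 : ℝ) ^ d * (j : ℝ)⁻¹ * (((j : ℝ) + d) ^ 2)⁻¹ * neg_one_pow_mul_self (R := ℝ) j
    -- swap `(d, j)` in the first summand; then `1/(d n²) + 1/(j n²) = 1/(d j n)` for `n = j + d`
    _ = simplexSum N (fun d j => (-1 : ℝ) ^ d * ((d : ℝ) * (j + d) ^ 2)⁻¹ +
        (-1) ^ d * ((j : ℝ) * (j + d) ^ 2)⁻¹) := by
        rw [simplexSum_add, simplexSum_add, simplexSum_comm N fun d j => (-1 : ℝ) ^ j * _]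
        congr 1
        refine simplexSum_congr fun d j _ _ => ?_
        ring
    _ = _ := by
        refine simplexSum_congr fun d j hd hj => ?_
        have hd' : (d : ℝ) ≠ 0 := by positivity
        have hj' : (j : ℝ) ≠ 0 := by positivity
        have hjd : (j : ℝ) + d ≠ 0 := by positivity
        field_simp
        ring

lemma sum_neg_one_pow_mul_inv_mul_sum (N : ℕ) :
    (∑ k ∈ Icc 1 N, (-1 : ℝ) ^ k * (k : ℝ)⁻¹) *
        ∑ l ∈ Icc 1 N, (((l : ℝ) ^ 2)⁻¹ + (-1) ^ l * ((l : ℝ) ^ 2)⁻¹) =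
      triangleSum N (fun k l => (-1 : ℝ) ^ (k + l) * ((k : ℝ) * (l : ℝ) ^ 2)⁻¹) +
        triangleSum N (fun k l => (-1 : ℝ) ^ k * ((k : ℝ) * (l : ℝ) ^ 2)⁻¹) +
        (simplexSum N fun d j => (-1) ^ d * ((d : ℝ) ^ 2)⁻¹ * ((j : ℝ)⁻¹ - ((j : ℝ) + d)⁻¹)) +
        ∑ k ∈ Icc 1 N, (((k : ℝ) ^ 3)⁻¹ + (-1) ^ k * ((k : ℝ) ^ 3)⁻¹) := by
  have hupper : triangleSum N (fun k l => (-1 : ℝ) ^ k * (k : ℝ)⁻¹ *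
      (((l : ℝ) ^ 2)⁻¹ + (-1) ^ l * ((l : ℝ) ^ 2)⁻¹)) =
      triangleSum N (fun k l => (-1 : ℝ) ^ (k + l) * ((k : ℝ) * (l : ℝ) ^ 2)⁻¹) +
        triangleSum N (fun k l => (-1 : ℝ) ^ k * ((k : ℝ) * (l : ℝ) ^ 2)⁻¹) := by
    simp only [triangleSum, ← sum_add_distrib]
    refine sum_congr rfl fun k _ => sum_congr rfl fun l _ => ?_
    rw [pow_add, mul_inv]
    ring
  rw [sum_Icc_mul_sum_Icc, hupper, triangleSum_eq_simplexSum_mul_inv_sub_inv]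
  congr 1
  refine sum_congr rfl fun k _ => ?_
  rw [show ((k : ℝ) ^ 3)⁻¹ = (k : ℝ)⁻¹ * ((k : ℝ) ^ 2)⁻¹ by rw [← mul_inv]; ring]
  linear_combination (k : ℝ)⁻¹ * ((k : ℝ) ^ 2)⁻¹ * neg_one_pow_mul_self (R := ℝ) k

lemma hasSum_sum_Ico_neg_one_pow_mul_inv_sq_mul :
    HasSum (fun k : ℕ => ∑ l ∈ Ico 1 k, (-1 : ℝ) ^ k * ((k : ℝ) ^ 2 * l)⁻¹)
      ((∑' d : ℕ, (-1) ^ d * ((d : ℝ) ^ 2)⁻¹ * harmonic d) -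
        ∑' n : ℕ, (-1) ^ n * ((n : ℝ) ^ 3)⁻¹) := by
  have hS : Summable fun d : ℕ => (-1 : ℝ) ^ d * ((d : ℝ) ^ 2)⁻¹ * harmonic d :=
    .of_abs <| by simpa only [abs_mul, abs_of_nonneg (harmonic_nonneg _)]
      using summable_abs_neg_one_pow_mul_inv_sq_mul_harmonic
  have h3 := (Real.summable_nat_pow_inv.2 (by norm_num : 1 < 3)).alternating
  refine (hS.hasSum.sub h3.hasSum).congr_fun fun k => ?_
  simp only [mul_inv, ← mul_sum, sum_Ico_one_inv]
  ring

lemma tendsto_triangleSum_neg_one_pow_add {L : ℝ}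
    (hL : Tendsto (fun N : ℕ => ∑ k ∈ Icc 1 N, (-1 : ℝ) ^ k * (k : ℝ)⁻¹) atTop (𝓝 L)) :
    Tendsto (fun N => triangleSum N fun k l => (-1 : ℝ) ^ (k + l) * ((k : ℝ) * (l : ℝ) ^ 2)⁻¹)
      atTop (𝓝 ((∑' n : ℕ, ((n : ℝ) ^ 2)⁻¹) * L -
        ∑' d : ℕ, (-1) ^ d * ((d : ℝ) ^ 2)⁻¹ * harmonic d)) := by
  simp only [triangleSum_neg_one_pow_add]
  exact (tendsto_simplexSum_mul (Real.summable_nat_pow_inv.2 (by norm_num)) (by simp) hL).sub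
    (tendsto_simplexSum_mul_inv_sub_inv summable_abs_neg_one_pow_mul_inv_sq_mul_harmonic)

lemma tendsto_two_mul_triangleSum_add_triangleSum {L : ℝ}
    (hL : Tendsto (fun N : ℕ => ∑ k ∈ Icc 1 N, (-1 : ℝ) ^ k * (k : ℝ)⁻¹) atTop (𝓝 L)) :
    Tendsto (fun N => 2 * triangleSum N (fun k l => (-1 : ℝ) ^ k * ((k : ℝ) ^ 2 * l)⁻¹) +
        triangleSum N fun k l => (-1 : ℝ) ^ k * ((k : ℝ) * (l : ℝ) ^ 2)⁻¹)
      atTop (𝓝 ((∑' n : ℕ, (-1) ^ n * ((n : ℝ) ^ 2)⁻¹) * L)) := by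
  refine (tendsto_simplexSum_mul (Real.summable_nat_pow_inv.2 (by norm_num)).alternating
    (by simp) hL).congr fun N => ?_
  linarith [triangleSum_neg_one_pow_inv_sq_mul N]

lemma tendsto_triangleSum_add_triangleSum {L : ℝ}
    (hL : Tendsto (fun N : ℕ => ∑ k ∈ Icc 1 N, (-1 : ℝ) ^ k * (k : ℝ)⁻¹) atTop (𝓝 L)) :
    Tendsto (fun N =>
        triangleSum N (fun k l => (-1 : ℝ) ^ (k + l) * ((k : ℝ) * (l : ℝ) ^ 2)⁻¹) +
        triangleSum N fun k l => (-1 : ℝ) ^ k * ((k : ℝ) * (l : ℝ) ^ 2)⁻¹)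
      atTop (𝓝 (L * ((∑' n : ℕ, ((n : ℝ) ^ 2)⁻¹) + ∑' n : ℕ, (-1) ^ n * ((n : ℝ) ^ 2)⁻¹) -
        (∑' d : ℕ, (-1) ^ d * ((d : ℝ) ^ 2)⁻¹ * harmonic d) -
        ((∑' n : ℕ, ((n : ℝ) ^ 3)⁻¹) + ∑' n : ℕ, (-1) ^ n * ((n : ℝ) ^ 3)⁻¹))) := by
  have h2 := Real.summable_nat_pow_inv.2 (by norm_num : 1 < 2)
  have h3 := Real.summable_nat_pow_inv.2 (by norm_num : 1 < 3)
  refine (((hL.mul ((h2.hasSum.add h2.alternating.hasSum).tendsto_sum_Icc_one (by simp))).sub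
    (tendsto_simplexSum_mul_inv_sub_inv summable_abs_neg_one_pow_mul_inv_sq_mul_harmonic)).sub
    ((h3.hasSum.add h3.alternating.hasSum).tendsto_sum_Icc_one (by simp))).congr fun N => ?_
  linarith [sum_neg_one_pow_mul_inv_mul_sum N]

/-- The conditionally convergent sums ζ(1̄,2̄) and ζ(1̄,2) enter as limits of partial sums: their
`tsum` would be `0`. -/
theorem zeta_1bar_2bar (a b : ℝ)
    (ha : Tendsto (fun N : ℕ => ∑ k ∈ Finset.Icc 1 N, ∑ l ∈ Finset.Ico 1 k,
        (-1 : ℝ) ^ (k + l) * ((k : ℝ) * (l : ℝ) ^ 2)⁻¹) atTop (𝓝 a))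
    (hb : Tendsto (fun N : ℕ => ∑ k ∈ Finset.Icc 1 N, ∑ l ∈ Finset.Ico 1 k,
        (-1 : ℝ) ^ k * ((k : ℝ) * (l : ℝ) ^ 2)⁻¹) atTop (𝓝 b)) :
    a = -2 * b + ∑' k : ℕ, ∑' l : ℕ, if 1 ≤ l ∧ l < k then
          (-1 : ℝ) ^ k * ((k : ℝ) ^ 2 * (l : ℝ))⁻¹ else 0 := by
  obtain ⟨L, hL⟩ := exists_tendsto_sum_Icc_neg_one_pow_mul_inv
  have hC := hasSum_sum_Ico_neg_one_pow_mul_inv_sq_mul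
  have hA := tendsto_nhds_unique ha (tendsto_triangleSum_neg_one_pow_add hL)
  have hCB := tendsto_nhds_unique (((hC.tendsto_sum_Icc_one (by simp)).const_mul 2).add hb)
    (tendsto_two_mul_triangleSum_add_triangleSum hL)
  have hAB := tendsto_nhds_unique (ha.add hb) (tendsto_triangleSum_add_triangleSum hL)
  have hη₂ := tsum_neg_one_pow_mul_inv_pow (p := 2) (by norm_num)
  have hη₃ := tsum_neg_one_pow_mul_inv_pow (p := 3) (by norm_num)
  simp only [tsum_ite_Ico, hC.tsum_eq]
  linear_combination -2 * hA - hCB + 3 * hAB + 2 * L * hη₂ - 4 * hη₃
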